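/- arXiv:1206.2364 — 3 statements merged into one kernel-verified Lean document; each statement's English description precedes it below -/
import Mathlib

section
/- Let X be a real vector space, let W be an ordered real vector space (an ordered additive group that is an ordered module over ℝ, with positive cone W₊ = {w ∈ W | 0 ≤ w}), and let Y be a Dedekind complete vector lattice (a lattice-ordered real vector space, with the order compatible with addition and multiplication by nonnegative scalars, in which every nonempty subset bounded above has a least upper bound). Let A : X → W and B : X → Y be linear maps, and assume that A(X) − W₊ = W₊ − A(X) = W, i.e., for every w ∈ W there exist x, x′ ∈ X with A x′ ≤ w ≤ A x. Then there exists a positive (monotone) linear operator 𝔛 : W → Y with 𝔛 ∘ A = B if and only if {x ∈ X | A x ≤ 0} ⊆ {x ∈ X | B x ≤ 0}. -/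
/-!
If `{A ≤ 0} ⊆ {B ≤ 0}`, then `A x ↦ B x` is a well-defined positive linear map on the subspace
`A(X)`, which majorizes `W`. Such a map extends to a positive linear map on all of `W`
(Kantorovich's extension theorem): by Zorn's lemma it suffices to extend across one new vector `y`,
and the value at `y` can be taken to be the supremum of `f x` over the `x ≤ y` in the domain, which
exists by Dedekind completeness since every `f x'` with `y ≤ x'` bounds it. The converse is
immediate from positivity.
-/

open Set

def IsDedekindComplete (Y : Type*) [Preorder Y] : Prop :=
  ∀ S : Set Y, S.Nonempty → BddAbove S → ∃ y, IsLUB S y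

namespace LinearPMap

section Zorn

variable {R E F : Type*} [Ring R] [AddCommGroup E] [Module R E] [AddCommGroup F] [Module R F]

theorem exists_extension_of_forall_exists_lt (P : E → F → Prop) (f : E →ₗ.[R] F)
    (hf : ∀ x : f.domain, P x (f x))
    (step : ∀ g, f ≤ g → (∀ x : g.domain, P x (g x)) → g.domain ≠ ⊤ →
      ∃ h, g < h ∧ ∀ x : h.domain, P x (h x)) :
    ∃ g : E →ₗ[R] F, (∀ x : f.domain, g x = f x) ∧ ∀ x, P x (g x) := by
  set S := {g : E →ₗ.[R] F | ∀ x : g.domain, P x (g x)}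
  have hchain : ∀ c ⊆ S, IsChain (· ≤ ·) c → ∀ g ∈ c, ∃ ub ∈ S, ∀ h ∈ c, h ≤ ub := by
    intro c hcS hc g hg
    have hcd : DirectedOn (· ≤ ·) c := hc.directedOn
    refine ⟨LinearPMap.sSup c hcd, ?_, fun _ => LinearPMap.le_sSup hcd⟩
    rintro ⟨x, hx⟩
    have hdir : DirectedOn (· ≤ ·) (domain '' c) :=
      directedOn_image.2 (hcd.mono domain_mono.monotone)
    obtain ⟨_, ⟨h, hhc, rfl⟩, hxh⟩ :=
      (Submodule.mem_sSup_of_directed ⟨_, mem_image_of_mem _ hg⟩ hdir).1 hx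
    have hval : h ⟨x, hxh⟩ = LinearPMap.sSup c hcd ⟨x, hx⟩ := (LinearPMap.le_sSup hcd hhc).2 rfl
    exact hval ▸ hcS hhc ⟨x, hxh⟩
  obtain ⟨⟨D, q⟩, hfq, hqS, hmax⟩ := zorn_le_nonempty₀ S hchain f hf
  obtain rfl : D = ⊤ := by
    by_contra hD
    obtain ⟨r, hqr, hrS⟩ := step _ hfq hqS hD
    exact hqr.not_ge (hmax hrS hqr.le)
  exact ⟨q ∘ₗ Submodule.topEquiv.symm.toLinearMap, fun _ => (hfq.2 rfl).symm,
    fun x => hqS ⟨x, Submodule.mem_top⟩⟩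

end Zorn

variable {W Y : Type*} [AddCommGroup W] [PartialOrder W] [IsOrderedAddMonoid W] [Module ℝ W]
  [AddCommGroup Y] [PartialOrder Y] [IsOrderedAddMonoid Y] [Module ℝ Y]

theorem apply_le_apply_of_nonneg {f : W →ₗ.[ℝ] Y} (hf : ∀ x : f.domain, 0 ≤ (x : W) → 0 ≤ f x)
    {x x' : f.domain} (h : (x : W) ≤ x') : f x ≤ f x' := by
  have := hf (x' - x) (by simpa [sub_nonneg] using h)
  rwa [LinearPMap.map_sub, sub_nonneg] at this

theorem exists_between_of_nonneg (hY : IsDedekindComplete Y) {f : W →ₗ.[ℝ] Y}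
    (hf : ∀ x : f.domain, 0 ≤ (x : W) → 0 ≤ f x) (hcof : ∀ w : W, ∃ x : f.domain, w ≤ (x : W))
    (y : W) :
    ∃ c : Y, (∀ x : f.domain, (x : W) ≤ y → f x ≤ c) ∧ ∀ x : f.domain, y ≤ x → c ≤ f x := by
  obtain ⟨xl, hxl⟩ := hcof (-y)
  obtain ⟨xu, hxu⟩ := hcof y
  obtain ⟨c, hc⟩ := hY (f '' {x | (x : W) ≤ y}) ⟨f (-xl), -xl, neg_le.1 hxl, rfl⟩
    ⟨f xu, by rintro _ ⟨x, hx, rfl⟩; exact apply_le_apply_of_nonneg hf (hx.trans hxu)⟩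
  refine ⟨c, fun x hx => hc.1 ⟨x, hx, rfl⟩, fun x hx => hc.2 ?_⟩
  rintro _ ⟨x', hx', rfl⟩
  exact apply_le_apply_of_nonneg hf (hx'.trans hx)

variable [PosSMulMono ℝ W] [PosSMulMono ℝ Y]

theorem nonneg_supSpanSingleton {f : W →ₗ.[ℝ] Y} (hf : ∀ x : f.domain, 0 ≤ (x : W) → 0 ≤ f x)
    {y : W} (hy : y ∉ f.domain) {c : Y} (hlow : ∀ x : f.domain, (x : W) ≤ y → f x ≤ c)
    (hup : ∀ x : f.domain, y ≤ x → c ≤ f x) (z : (f.supSpanSingleton y c hy).domain)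
    (hz : 0 ≤ (z : W)) : 0 ≤ f.supSpanSingleton y c hy z := by
  obtain ⟨z, hz'⟩ := z
  obtain ⟨x, hx, _, hr, rfl⟩ := Submodule.mem_sup.1 hz'
  obtain ⟨r, rfl⟩ := Submodule.mem_span_singleton.1 hr
  rw [supSpanSingleton_apply_mk _ _ _ _ _ hx, RingHom.id_apply]
  change 0 ≤ x + r • y at hz
  rcases lt_trichotomy r 0 with hr | rfl | hr
  · have ht : 0 < -r := neg_pos.2 hr
    have := hup ((-r)⁻¹ • ⟨x, hx⟩) (by
      rw [Submodule.coe_smul, le_inv_smul_iff_of_pos ht, neg_smul]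
      exact neg_le_iff_add_nonneg.2 hz)
    rw [map_smul, le_inv_smul_iff_of_pos ht, neg_smul] at this
    exact neg_le_iff_add_nonneg.1 this
  · simpa using hf ⟨x, hx⟩ (by simpa using hz)
  · have := hlow (r⁻¹ • -⟨x, hx⟩) (by
      rw [Submodule.coe_smul, inv_smul_le_iff_of_pos hr, Submodule.coe_neg, neg_le_iff_add_nonneg']
      exact hz)
    rwa [map_smul, inv_smul_le_iff_of_pos hr, map_neg, neg_le_iff_add_nonneg'] at this

theorem exists_gt_nonneg_of_domain_ne_top (hY : IsDedekindComplete Y) {f : W →ₗ.[ℝ] Y}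
    (hf : ∀ x : f.domain, 0 ≤ (x : W) → 0 ≤ f x) (hcof : ∀ w : W, ∃ x : f.domain, w ≤ (x : W))
    (hdom : f.domain ≠ ⊤) : ∃ g, f < g ∧ ∀ x : g.domain, 0 ≤ (x : W) → 0 ≤ g x := by
  obtain ⟨y, -, hy⟩ := SetLike.exists_of_lt (lt_top_iff_ne_top.2 hdom)
  obtain ⟨c, hlow, hup⟩ := exists_between_of_nonneg hY hf hcof y
  refine ⟨f.supSpanSingleton y c hy, lt_of_le_of_ne (f.left_le_sup _ _) fun h => hy ?_,
    nonneg_supSpanSingleton hf hy hlow hup⟩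
  rw [congrArg domain h, domain_supSpanSingleton]
  exact Submodule.mem_sup_right (Submodule.mem_span_singleton_self y)

theorem exists_nonneg_extension (hY : IsDedekindComplete Y) (f : W →ₗ.[ℝ] Y)
    (hf : ∀ x : f.domain, 0 ≤ (x : W) → 0 ≤ f x) (hcof : ∀ w : W, ∃ x : f.domain, w ≤ (x : W)) :
    ∃ g : W →ₗ[ℝ] Y, (∀ x : f.domain, g x = f x) ∧ ∀ w, 0 ≤ w → 0 ≤ g w :=
  exists_extension_of_forall_exists_lt (fun w y => 0 ≤ w → 0 ≤ y) f hf
    fun _ hfg hg hdom => exists_gt_nonneg_of_domain_ne_top hY hg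
      (fun w => let ⟨x, hx⟩ := hcof w; ⟨Submodule.inclusion hfg.1 x, hx⟩) hdom

end LinearPMap

namespace LinearMap

variable {R X W Y : Type*} [Ring R] [AddCommGroup X] [Module R X] [AddCommGroup W] [Module R W]
  [AddCommGroup Y] [Module R Y]

noncomputable def rangeLift (A : X →ₗ[R] W) (B : X →ₗ[R] Y) (h : ker A ≤ ker B) : W →ₗ.[R] Y :=
  ⟨range A, (ker A).liftQ B h ∘ₗ A.quotKerEquivRange.symm.toLinearMap⟩

@[simp]
theorem rangeLift_apply_mk (A : X →ₗ[R] W) (B : X →ₗ[R] Y) (h : ker A ≤ ker B) (x : X) :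
    A.rangeLift B h ⟨A x, mem_range_self A x⟩ = B x := by
  simp [rangeLift]

end LinearMap

/-- Kantorovich's Theorem, part (2): with `W` an ordered vector space and `Y` a
Dedekind complete vector lattice (Kantorovich space), if `A(X) - W₊ = W₊ - A(X) = W`
then a positive linear operator `𝔛 : W → Y` with `𝔛 ∘ A = B` exists if and only if
`{A ≤ 0} ⊆ {B ≤ 0}`. -/
theorem kantorovich_positive_factorization
    {X W Y : Type*} [AddCommGroup X] [Module ℝ X]
    [AddCommGroup W] [PartialOrder W] [IsOrderedAddMonoid W] [Module ℝ W] [PosSMulStrictMono ℝ W]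
    [Lattice Y] [AddCommGroup Y] [CovariantClass Y Y (· + ·) (· ≤ ·)] [Module ℝ Y]
    (hsmul : ∀ (t : ℝ) (y : Y), 0 ≤ t → 0 ≤ y → 0 ≤ t • y)
    (hDedekind : ∀ S : Set Y, S.Nonempty → BddAbove S → ∃ y : Y, IsLUB S y)
    (A : X →ₗ[ℝ] W) (B : X →ₗ[ℝ] Y)
    (hA : ∀ w : W, ∃ x x' : X, A x' ≤ w ∧ w ≤ A x) :
    (∃ 𝔛 : W →ₗ[ℝ] Y, (∀ w : W, 0 ≤ w → 0 ≤ 𝔛 w) ∧ 𝔛 ∘ₗ A = B) ↔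
      {x : X | A x ≤ 0} ⊆ {x : X | B x ≤ 0} := by
  constructor
  · rintro ⟨T, hT, rfl⟩ x hx
    simpa using hT _ (neg_nonneg.2 hx)
  · intro hAB
    have : IsOrderedAddMonoid Y := { add_le_add_left := fun _ _ h c => add_le_add_left h c }
    have : PosSMulMono ℝ Y := .of_smul_nonneg fun t ht y hy => hsmul t y ht hy
    have hpos : ∀ x, 0 ≤ A x → 0 ≤ B x := fun x hx => by
      simpa using hAB (show A (-x) ≤ 0 by simpa using hx)
    have hker : LinearMap.ker A ≤ LinearMap.ker B := fun x hx =>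
      le_antisymm (hAB (le_of_eq hx)) (hpos x (ge_of_eq hx))
    obtain ⟨T, hTA, hT⟩ := LinearPMap.exists_nonneg_extension hDedekind (A.rangeLift B hker)
      (by rintro ⟨_, x, rfl⟩ hx; simpa using hpos x hx)
      (fun w => (hA w).elim fun x ⟨_, _, hx⟩ => ⟨⟨A x, LinearMap.mem_range_self A x⟩, hx⟩)
    exact ⟨T, hT, LinearMap.ext fun x => (hTA _).trans (A.rangeLift_apply_mk B hker x)⟩
end

section
/- Let X be a set, let Y be a topological space, let F : X → Set Y be a correspondence, and let 𝒩 be a filter on X. Let the grill of 𝒩 be the family of all subsets A of X such that A ∩ U is nonempty for every U ∈ 𝒩. Then ⋂_{A ∈ grill(𝒩)} closure(⋃_{x ∈ A} F(x)) = {y ∈ Y | for every neighborhood V of y, the set {x ∈ X | F(x) ∩ V is nonempty} belongs to 𝒩}. -/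
/-!
A point `y` lies in `closure (⋃ x ∈ A, F x)` iff every neighbourhood `V` of `y` meets some `F x`
with `x ∈ A`. Since the members of the grill of `𝒩` are exactly the sets that are `𝒩`-frequent,
`y` lies in all these closures iff, for each `V`, the set `{x | (F x ∩ V).Nonempty}` meets every
`𝒩`-frequent set, i.e. iff its complement is not frequent, i.e. iff it belongs to `𝒩`.
-/

open Filter Set Topology

namespace Filter

variable {X : Type*}

def grill (f : Filter X) : Set (Set X) := {A | ∀ U ∈ f, (A ∩ U).Nonempty}

theorem mem_grill_iff_frequently {f : Filter X} {A : Set X} :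
    A ∈ f.grill ↔ ∃ᶠ x in f, x ∈ A := by
  simp only [grill, mem_ofPred_eq, frequently_iff, inter_comm A]
  rfl

theorem eventually_iff_forall_frequently_imp_exists {f : Filter X} {p : X → Prop} :
    (∀ᶠ x in f, p x) ↔ ∀ A : Set X, (∃ᶠ x in f, x ∈ A) → ∃ x ∈ A, p x := by
  refine ⟨fun hp A hA => (hA.and_eventually hp).exists, fun h => ?_⟩
  by_contra hnot
  obtain ⟨x, hx, hpx⟩ := h {x | ¬p x} (not_eventually.mp hnot)
  exact hx hpx

end Filter

theorem mem_closure_biUnion_iff {X Y : Type*} [TopologicalSpace Y] {F : X → Set Y} {A : Set X}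
    {y : Y} : y ∈ closure (⋃ x ∈ A, F x) ↔ ∀ V ∈ 𝓝 y, ∃ x ∈ A, (F x ∩ V).Nonempty := by
  simp only [mem_closure_iff_nhds, inter_iUnion₂, nonempty_biUnion, inter_comm]

/-- The Kuratowski–Painlevé limit inferior (the `∀∃`-limit) of a correspondence
`F` along a filter `𝒩` equals the intersection over all members `A` of the
grill of `𝒩` of `closure (⋃_{x ∈ A} F x)`. -/
theorem liminf_correspondence
    {X Y : Type*} [TopologicalSpace Y] (F : X → Set Y) (𝒩 : Filter X) :
    ⋂ A ∈ {A : Set X | ∀ U ∈ 𝒩, (A ∩ U).Nonempty}, closure (⋃ x ∈ A, F x) =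
      {y : Y | ∀ V ∈ nhds y, {x : X | (F x ∩ V).Nonempty} ∈ 𝒩} := by
  show ⋂ A ∈ 𝒩.grill, closure (⋃ x ∈ A, F x) = _
  ext y
  simp only [mem_iInter, mem_closure_biUnion_iff, mem_grill_iff_frequently, mem_ofPred_eq]
  simp only [← eventually_iff, eventually_iff_forall_frequently_imp_exists]
  exact ⟨fun h V hV A hA => h A hA V hV, fun h A hA V hV => h V hV A hA⟩
end

section
/- Let X be a real vector space, let f, g : X → ℝ be convex functions, and let ε ≥ 0 and δ ≥ 0 be real numbers. Let h : X → ℝ be the infimal convolution of f and g, i.e., for every x ∈ X, h(x) = inf{f(u) + g(v) | u, v ∈ X, u + v = x} and this infimum is a real number (h(x) ≤ f(u) + g(v) whenever u + v = x, and h(x) is the greatest such lower bound). Fix x̄, ȳ ∈ X and assume the convolution is δ-exact at (x̄, ȳ), i.e., h(x̄) + δ = f(ȳ) + g(x̄ − ȳ). Then for every linear functional l : X → ℝ, l belongs to the ε-subdifferential ∂_ε h(x̄) if and only if there exist real numbers ε₁ ≥ 0 and ε₂ ≥ 0 with ε₁ + ε₂ = ε + δ such that l ∈ ∂_{ε₁}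 f(ȳ) and l ∈ ∂_{ε₂} g(x̄ − ȳ). -/
/-!
As `h x` is the greatest lower bound of `f u + g v` over `u + v = x`, a common
`ε₁`-subgradient of `f` at `y` and `ε₂`-subgradient of `g` at `x₀ - y` is an
`(ε₁ + ε₂ - δ)`-subgradient of `h` at `x₀`, the exactness gap `δ` being absorbed.
Conversely, if `l ∈ ∂_ε h(x₀)` then `(l u - f u) + (l v - g v) ≤ l x₀ - h x₀ + ε` for all `u, v`,
so `c := sup (l - f)` is finite and splits this bound: `l - f ≤ c` and `l - g ≤ l x₀ - h x₀ + ε - c`.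
Exactness turns these into `l ∈ ∂_{ε₁} f(y)` and `l ∈ ∂_{ε₂} g(x₀ - y)` with `ε₁ + ε₂ = ε + δ`.
-/

open Set

def epsSubdiff {X : Type*} [AddCommGroup X] [Module ℝ X] (φ : X → ℝ) (ε : ℝ) (x₀ : X) :
    Set (X →ₗ[ℝ] ℝ) :=
  {l | ∀ x, l x - φ x ≤ l x₀ - φ x₀ + ε}

namespace InfConvolution

variable {X : Type*} [AddCommGroup X] [Module ℝ X]
variable {f g h : X → ℝ} {l : X →ₗ[ℝ] ℝ} {ε δ : ℝ} {x₀ y : X}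

theorem mem_epsSubdiff_of_mem_epsSubdiff
    (hh : ∀ x, h x ∈ upperBounds (lowerBounds {r | ∃ u v, u + v = x ∧ r = f u + g v}))
    (hexact : h x₀ + δ = f y + g (x₀ - y)) {ε₁ ε₂ : ℝ} (hsum : ε₁ + ε₂ = ε + δ)
    (hf : l ∈ epsSubdiff f ε₁ y) (hg : l ∈ epsSubdiff g ε₂ (x₀ - y)) :
    l ∈ epsSubdiff h ε x₀ := by
  intro x
  have hlb : l x - (l x₀ - h x₀ + ε) ∈ lowerBounds {r | ∃ u v, u + v = x ∧ r = f u + g v} := by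
    rintro r ⟨u, v, rfl, rfl⟩
    have := hf u
    have := hg v
    simp only [map_add, map_sub] at *
    linarith
  have := hh x hlb
  linarith

theorem exists_of_mem_epsSubdiff
    (hh : ∀ x, h x ∈ lowerBounds {r | ∃ u v, u + v = x ∧ r = f u + g v})
    (hexact : h x₀ + δ = f y + g (x₀ - y)) (hl : l ∈ epsSubdiff h ε x₀) :
    ∃ ε₁ ε₂ : ℝ, 0 ≤ ε₁ ∧ 0 ≤ ε₂ ∧ ε₁ + ε₂ = ε + δ ∧
      l ∈ epsSubdiff f ε₁ y ∧ l ∈ epsSubdiff g ε₂ (x₀ - y) := by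
  set M := l x₀ - h x₀ + ε
  have hsplit : ∀ u v, (l u - f u) + (l v - g v) ≤ M := fun u v => by
    have := hl (u + v)
    have : h (u + v) ≤ f u + g v := hh (u + v) ⟨u, v, rfl, rfl⟩
    rw [map_add] at *
    linarith
  have hbdd : BddAbove (range fun u => l u - f u) :=
    ⟨M - (l 0 - g 0), by rintro _ ⟨u, rfl⟩; linarith [hsplit u 0]⟩
  set c := ⨆ u, l u - f u
  have hf_le : ∀ u, l u - f u ≤ c := le_ciSup hbdd
  have hg_le : ∀ v, l v - g v ≤ M - c := fun v => by
    have : c ≤ M - (l v - g v) := ciSup_le fun u => by linarith [hsplit u v]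
    linarith
  have hl_sub : l (x₀ - y) = l x₀ - l y := map_sub l x₀ y
  refine ⟨c - (l y - f y), ε + δ - (c - (l y - f y)), ?_, ?_, by ring, fun x => ?_, fun x => ?_⟩
  · linarith [hf_le y]
  · linarith [hg_le (x₀ - y)]
  · linarith [hf_le x]
  · linarith [hg_le x]

end InfConvolution

theorem eps_subdifferential_of_convolution_general
    {X : Type*} [AddCommGroup X] [Module ℝ X]
    (f g h : X → ℝ)
    (ε δ : ℝ)
    (hh : ∀ x : X, IsGLB {r : ℝ | ∃ u v : X, u + v = x ∧ r = f u + g v} (h x))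
    (xb yb : X) (hexact : h xb + δ = f yb + g (xb - yb)) :
    ∀ l : X →ₗ[ℝ] ℝ,
      (∀ x : X, l x - h x ≤ l xb - h xb + ε) ↔
        ∃ ε₁ ε₂ : ℝ, 0 ≤ ε₁ ∧ 0 ≤ ε₂ ∧ ε₁ + ε₂ = ε + δ ∧
          (∀ x : X, l x - f x ≤ l yb - f yb + ε₁) ∧
          (∀ x : X, l x - g x ≤ l (xb - yb) - g (xb - yb) + ε₂) := fun _ =>
  ⟨InfConvolution.exists_of_mem_epsSubdiff (fun x => (hh x).1) hexact,
    fun ⟨_, _, _, _, hsum, hf, hg⟩ =>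
      InfConvolution.mem_epsSubdiff_of_mem_epsSubdiff (fun x => (hh x).2) hexact hsum hf hg⟩

/-- Scalar case of Theorem 3: ε-subdifferential of a δ-exact infimal convolution.
If `h` is the (real-valued) infimal convolution of the convex functions `f` and `g`,
and it is δ-exact at `(xb, yb)`, then `l ∈ ∂_ε h(xb)` iff `l ∈ ∂_{ε₁} f(yb)` and
`l ∈ ∂_{ε₂} g(xb - yb)` for some `ε₁, ε₂ ≥ 0` with `ε₁ + ε₂ = ε + δ`. -/
theorem eps_subdifferential_of_convolution
    {X : Type*} [AddCommGroup X] [Module ℝ X]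
    (f g h : X → ℝ) (hf : ConvexOn ℝ Set.univ f) (hg : ConvexOn ℝ Set.univ g)
    (ε δ : ℝ) (hε : 0 ≤ ε) (hδ : 0 ≤ δ)
    (hh : ∀ x : X, IsGLB {r : ℝ | ∃ u v : X, u + v = x ∧ r = f u + g v} (h x))
    (xb yb : X) (hexact : h xb + δ = f yb + g (xb - yb)) :
    ∀ l : X →ₗ[ℝ] ℝ,
      (∀ x : X, l x - h x ≤ l xb - h xb + ε) ↔
        ∃ ε₁ ε₂ : ℝ, 0 ≤ ε₁ ∧ 0 ≤ ε₂ ∧ ε₁ + ε₂ = ε + δ ∧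
          (∀ x : X, l x - f x ≤ l yb - f yb + ε₁) ∧
          (∀ x : X, l x - g x ≤ l (xb - yb) - g (xb - yb) + ε₂) :=
  eps_subdifferential_of_convolution_general f g h ε δ hh xb yb hexact
end
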